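/- The shortest path graph of the two-dimensional grid P_{n_1} □ P_{n_2} between the diametric corner vertices (0,0) and (n_1,n_2) is isomorphic to the staircase graph S_{n_1,n_2}, the induced subgraph of the integer lattice graph Z^{n_2} on vertex set {(a_1,…,a_{n_2}) ∈ Z^{n_2} : n_1 ≥ a_1 ≥ a_2 ≥ ⋯ ≥ a_{n_2} ≥ 0}. -/

import Mathlib

/-!
A geodesic from `(0, 0)` to `(n₁, n₂)` makes `n₁ + n₂` unit steps, each increasing one
coordinate, so it is determined by the strictly increasing times `v 0 < ⋯ < v (n₂ - 1)` of its
vertical steps: its vertex at time `t` is `(t - c t, c t)` with `c t = #{i | v i < t}`, and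
`i < c t ↔ v i < t`. Two geodesics differ in exactly one vertex iff their counting functions
differ at exactly one time, which by this Galois correspondence happens iff a single vertical
step is shifted by one, i.e. `v` and `v'` differ in one coordinate, by one. The substitution
`a i = n₁ + i - v i` maps these sequences onto the staircase and this relation onto lattice
adjacency.
-/

open SimpleGraph

/-- The type of `a,b`-geodesics in `G`: paths from `a` to `b` of length `d_G(a,b)`. -/
def Geodesic {V : Type*} (G : SimpleGraph V) (a b : V) : Type _ :=
  {p : G.Walk a b // p.IsPath ∧ p.length = G.dist a b}

/-- Two geodesics differ at exactly the index `i` (comparing vertex sequences). -/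
def DiffAt {V : Type*} {G : SimpleGraph V} {a b : V} (U W : Geodesic G a b) (i : ℕ) : Prop :=
  U.1.support.getD i a ≠ W.1.support.getD i a ∧
    ∀ j, j ≠ i → U.1.support.getD j a = W.1.support.getD j a

/-- The shortest path graph `S(G,a,b)`: vertices are `a,b`-geodesics, adjacent iff their
vertex sequences differ in exactly one position. -/
def SPG {V : Type*} (G : SimpleGraph V) (a b : V) : SimpleGraph (Geodesic G a b) where
  Adj U W := ∃ i, DiffAt U W i
  symm := by
    constructor
    rintro U W ⟨i, hne, hj⟩
    exact ⟨i, hne.symm, fun j hji => (hj j hji).symm⟩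
  loopless := by
    constructor
    rintro U ⟨i, hne, -⟩
    exact hne rfl

/-- A graph is a shortest path graph if it is isomorphic to `S(G,a,b)` for some `G`, `a ≠ b`. -/
def IsSPGraph {α : Type*} (H : SimpleGraph α) : Prop :=
  ∃ (V : Type) (G : SimpleGraph V) (a b : V), a ≠ b ∧ Nonempty (H ≃g SPG G a b)

/-- The integer lattice graph `ℤ^m`: two points are adjacent iff their L¹-distance is 1. -/
def latticeGraph (m : ℕ) : SimpleGraph (Fin m → ℤ) where
  Adj x y := ∃ i, (x i - y i).natAbs = 1 ∧ ∀ j, j ≠ i → x j = y j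
  symm := by
    constructor
    rintro x y ⟨i, h1, h2⟩
    refine ⟨i, ?_, fun j hj => (h2 j hj).symm⟩
    rw [← Int.natAbs_neg]; simpa using h1
  loopless := by
    constructor
    rintro x ⟨i, h1, -⟩
    simp at h1

open Finset

namespace SimpleGraph.Walk

variable {V : Type*} {G : SimpleGraph V}

def ofSeq (g : ℕ → V) (L : ℕ) (h : ∀ t < L, G.Adj (g t) (g (t + 1))) : G.Walk (g 0) (g L) :=
  (ofSupport ((List.range (L + 1)).map g) (by simp)
    (List.isChain_map_of_isChain g (fun _ _ h => h) ((List.isChain_range_succ _ L).2 h))).copy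
    (by simp) (by simp [List.getLast_map])

lemma length_ofSeq (g : ℕ → V) (L : ℕ) (h) : (ofSeq (G := G) g L h).length = L := by
  simp [ofSeq]

lemma getVert_ofSeq (g : ℕ → V) (L : ℕ) (h) {t : ℕ} (ht : t ≤ L) :
    (ofSeq (G := G) g L h).getVert t = g t := by
  rw [getVert_eq_support_getElem _ (by rwa [length_ofSeq])]
  simp [ofSeq]

lemma apply_le_apply_add_length {f : V → ℕ} (hf : ∀ u v, G.Adj u v → f v ≤ f u + 1) {u w : V}
    (p : G.Walk u w) : f w ≤ f u + p.length := by
  induction p with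
  | nil => simp
  | cons h _ ih =>
    have := hf _ _ h
    rw [length_cons]
    omega

lemma getD_support_eq_iff {a b : V} {p q : G.Walk a b} (hpq : p.length = q.length) (j : ℕ) :
    p.support.getD j a = q.support.getD j a ↔ p.getVert j = q.getVert j := by
  rcases le_or_gt j p.length with hj | hj
  · rw [p.getVert_eq_support_getElem hj, q.getVert_eq_support_getElem (hpq ▸ hj),
      List.getD_eq_getElem, List.getD_eq_getElem]
  · rw [List.getD_eq_default _ _ (by simp; omega), List.getD_eq_default _ _ (by simp; omega),
      p.getVert_of_length_le hj.le, q.getVert_of_length_le (hpq ▸ hj.le)]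
    simp

end SimpleGraph.Walk

namespace GridGeodesic

def DiffOnlyAt {α β : Type*} (f g : α → β) (a : α) : Prop :=
  f a ≠ g a ∧ ∀ b, b ≠ a → f b = g b

lemma DiffOnlyAt.symm {α β : Type*} {f g : α → β} {a : α} (h : DiffOnlyAt f g a) :
    DiffOnlyAt g f a :=
  ⟨h.1.symm, fun b hb => (h.2 b hb).symm⟩

lemma spg_adj_iff {V : Type*} {G : SimpleGraph V} {a b : V} (U W : Geodesic G a b) :
    (SPG G a b).Adj U W ↔ ∃ i, DiffOnlyAt U.1.getVert W.1.getVert i := by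
  have hlen : U.1.length = W.1.length := U.2.2.trans W.2.2.symm
  simp only [SPG, DiffAt, DiffOnlyAt, ne_eq, Walk.getD_support_eq_iff hlen]

section CountBelow

variable {n : ℕ} {v v' : Fin n → ℕ} {s t : ℕ}

def countBelow (v : Fin n → ℕ) (t : ℕ) : ℕ := #{i | v i < t}

lemma countBelow_le_card (v : Fin n → ℕ) (t : ℕ) : countBelow v t ≤ n := by
  simpa [countBelow] using card_filter_le univ fun i => v i < t

lemma countBelow_zero (v : Fin n → ℕ) : countBelow v 0 = 0 := by
  simp [countBelow]

lemma countBelow_mono (v : Fin n → ℕ) : Monotone (countBelow v) :=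
  fun _ _ hst => card_le_card fun _ => by
    simp only [mem_filter, mem_univ, true_and]
    omega

lemma countBelow_le_add (hv : Function.Injective v) (s t : ℕ) :
    countBelow v t ≤ countBelow v s + (t - s) := by
  have hsub : ({i | v i < t} : Finset (Fin n)) ⊆
      ({i | v i < s} : Finset (Fin n)) ∪ ({i | v i ∈ Ico s t} : Finset (Fin n)) :=
    fun i => by simp only [mem_filter, mem_univ, true_and, mem_union, mem_Ico]; omega
  have hmid : #({i | v i ∈ Ico s t} : Finset (Fin n)) ≤ t - s := by
    calc _ ≤ #(Ico s t) := card_le_card_of_injOn v (fun i hi => (mem_filter.1 hi).2) hv.injOn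
      _ = t - s := Nat.card_Ico s t
  exact (card_le_card hsub).trans ((card_union_le _ _).trans (by unfold countBelow; omega))

lemma countBelow_eq_of_forall_lt_iff {k : ℕ} (hk : k ≤ n)
    (h : ∀ i : Fin n, v i < t ↔ (i : ℕ) < k) :
    countBelow v t = k := by
  simp only [countBelow, h, Fin.card_filter_val_lt]
  omega

lemma countBelow_apply (hv : StrictMono v) (i : Fin n) : countBelow v (v i) = i :=
  countBelow_eq_of_forall_lt_iff i.isLt.le fun _ => hv.lt_iff_lt

lemma countBelow_apply_add_one (hv : StrictMono v) (i : Fin n) :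
    countBelow v (v i + 1) = i + 1 :=
  countBelow_eq_of_forall_lt_iff i.isLt fun _ =>
    Nat.lt_succ_iff.trans (hv.le_iff_le.trans Nat.lt_succ_iff.symm)

lemma lt_countBelow_iff (hv : StrictMono v) {i : Fin n} :
    (i : ℕ) < countBelow v t ↔ v i < t := by
  constructor
  · intro h
    by_contra! ht
    have := countBelow_mono v ht
    rw [countBelow_apply hv] at this
    omega
  · intro h
    have := countBelow_mono v (Nat.succ_le_of_lt h)
    rw [countBelow_apply_add_one hv] at this
    omega

lemma eq_of_countBelow_eq (hv : StrictMono v) (hv' : StrictMono v')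
    (h : countBelow v = countBelow v') : v = v' := by
  have key : ∀ i t, v i < t ↔ v' i < t := fun i t => by
    rw [← lt_countBelow_iff hv, ← lt_countBelow_iff hv', h]
  funext i
  exact le_antisymm (Nat.le_of_lt_succ ((key i _).2 (Nat.lt_succ_self _)))
    (Nat.le_of_lt_succ ((key i _).1 (Nat.lt_succ_self _)))

lemma countBelow_of_le {N : ℕ} (hN : ∀ i, v i < N) (ht : N ≤ t) : countBelow v t = n :=
  countBelow_eq_of_forall_lt_iff le_rfl fun i => iff_of_true ((hN i).trans_le ht) i.isLt

lemma exists_strictMono_countBelow_eq {y : ℕ → ℕ} {N : ℕ} (h0 : y 0 = 0)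
    (hmono : Monotone y) (hstep : ∀ t, y (t + 1) ≤ y t + 1) (hN : y N = n) :
    ∃ v : Fin n → ℕ, StrictMono v ∧ (∀ i, v i < N) ∧
      ∀ t, t ≤ N → countBelow v t = y t := by
  have hex : ∀ i : Fin n, ∃ t, (i : ℕ) < y t := fun i => ⟨N, hN ▸ i.isLt⟩
  -- `v i` is the last time at which `y` is still at most `i`
  set v : Fin n → ℕ := fun i => Nat.find (hex i) - 1
  have galois : ∀ i t, v i < t ↔ (i : ℕ) < y t := fun i t => by
    have hpos : 0 < Nat.find (hex i) := Nat.find_pos _ |>.2 (by simp [h0])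
    rw [show v i < t ↔ Nat.find (hex i) ≤ t from (Nat.sub_lt_iff_lt_add hpos).trans (by omega),
      Nat.find_le_iff]
    exact ⟨fun ⟨m, hm, hi⟩ => hi.trans_le (hmono hm), fun hi => ⟨t, le_rfl, hi⟩⟩
  refine ⟨v, fun i j hij => ?_, fun i => (galois i N).2 (hN ▸ i.isLt), fun t ht =>
    countBelow_eq_of_forall_lt_iff (hN ▸ hmono ht) fun i => galois i t⟩
  have := (galois j (v j + 1)).1 (Nat.lt_succ_self _)
  have := hstep (v j)
  have : (i : ℕ) < j := hij
  exact (galois i _).2 (by omega)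

lemma apply_add_one_eq_of_diffOnlyAt (hv : StrictMono v) (hv' : StrictMono v')
    (h : DiffOnlyAt (countBelow v) (countBelow v') s) {i : Fin n} (hi : v i < v' i) :
    v i + 1 = s ∧ v' i = s := by
  have key : ∀ t, t ≠ s → (v i < t ↔ v' i < t) := fun t ht => by
    rw [← lt_countBelow_iff hv, ← lt_countBelow_iff hv', h.2 t ht]
  constructor
  · by_contra hs
    have := (key _ hs).1 (Nat.lt_succ_self _)
    omega
  · by_contra hs
    exact lt_irrefl _ ((key _ hs).1 hi)

lemma exists_of_countBelow_diffOnlyAt (hv : StrictMono v) (hv' : StrictMono v')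
    (h : DiffOnlyAt (countBelow v) (countBelow v') s) :
    ∃ k, ((v k : ℤ) - v' k).natAbs = 1 ∧ ∀ j, j ≠ k → v j = v' j := by
  obtain ⟨k, hk⟩ : ∃ k, v k ≠ v' k := by
    by_contra! hc
    exact h.1 (by rw [funext hc])
  wlog hlt : v k < v' k generalizing v v'
  · obtain ⟨k', hk', hj⟩ := this hv' hv h.symm hk.symm (by omega)
    exact ⟨k', by omega, fun j hjk => (hj j hjk).symm⟩
  obtain ⟨hk₁, hk₂⟩ := apply_add_one_eq_of_diffOnlyAt hv hv' h hlt
  refine ⟨k, by omega, fun j hjk => ?_⟩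
  by_contra hne
  rcases Nat.lt_or_gt_of_ne hne with hj | hj
  · exact hjk (hv'.injective ((apply_add_one_eq_of_diffOnlyAt hv hv' h hj).2.trans hk₂.symm))
  · -- the two moved entries would have to cross each other
    obtain ⟨hj₁, hj₂⟩ := apply_add_one_eq_of_diffOnlyAt hv' hv h.symm hj
    exact lt_asymm (hv.lt_iff_lt.1 (by omega : v k < v j)) (hv'.lt_iff_lt.1 (by omega))

lemma countBelow_diffOnlyAt_of_eq_add_one (hv : StrictMono v) (hv' : StrictMono v') {k : Fin n}
    (hk : v k = v' k + 1) (h : ∀ j, j ≠ k → v j = v' j) :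
    DiffOnlyAt (countBelow v) (countBelow v') (v k) := by
  refine ⟨?_, fun t ht => ?_⟩
  · rw [countBelow_apply hv, hk, countBelow_apply_add_one hv']
    omega
  · unfold countBelow
    congr 1
    refine filter_congr fun i _ => ?_
    rcases eq_or_ne i k with rfl | hik
    · omega
    · rw [h i hik]

lemma exists_countBelow_diffOnlyAt_iff (hv : StrictMono v) (hv' : StrictMono v') :
    (∃ s, DiffOnlyAt (countBelow v) (countBelow v') s) ↔
      ∃ k, ((v k : ℤ) - v' k).natAbs = 1 ∧ ∀ j, j ≠ k → v j = v' j := by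
  refine ⟨fun ⟨s, h⟩ => exists_of_countBelow_diffOnlyAt hv hv' h, fun ⟨k, hk, h⟩ => ?_⟩
  rcases Int.natAbs_eq_iff.1 hk with hk | hk
  · exact ⟨_, countBelow_diffOnlyAt_of_eq_add_one hv hv' (k := k) (by omega) h⟩
  · exact ⟨_, (countBelow_diffOnlyAt_of_eq_add_one hv' hv (k := k) (by omega)
      fun j hj => (h j hj).symm).symm⟩

end CountBelow

section Grid

variable {n₁ n₂ : ℕ}

abbrev grid (n₁ n₂ : ℕ) : SimpleGraph (Fin (n₁ + 1) × Fin (n₂ + 1)) :=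
  pathGraph (n₁ + 1) □ pathGraph (n₂ + 1)

lemma grid_adj_iff {x y : Fin (n₁ + 1) × Fin (n₂ + 1)} :
    (grid n₁ n₂).Adj x y ↔
      ((x.1 : ℕ) + 1 = y.1 ∨ (y.1 : ℕ) + 1 = x.1) ∧ (x.2 : ℕ) = y.2 ∨
      ((x.2 : ℕ) + 1 = y.2 ∨ (y.2 : ℕ) + 1 = x.2) ∧ (x.1 : ℕ) = y.1 := by
  simp only [boxProd_adj, pathGraph_adj, Fin.val_inj]

lemma rank_le_add_length {x y : Fin (n₁ + 1) × Fin (n₂ + 1)} (p : (grid n₁ n₂).Walk x y) :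
    (y.1 : ℕ) + y.2 ≤ x.1 + x.2 + p.length :=
  Walk.apply_le_apply_add_length (f := fun x => (x.1 : ℕ) + x.2)
    (fun _ _ h => by rw [grid_adj_iff] at h; omega) p

lemma rank_getVert {p : (grid n₁ n₂).Walk (0, 0) (Fin.last n₁, Fin.last n₂)}
    (hp : p.length = n₁ + n₂) {t : ℕ} (ht : t ≤ n₁ + n₂) :
    ((p.getVert t).1 : ℕ) + (p.getVert t).2 = t := by
  have h₁ := rank_le_add_length (p.take t)
  have h₂ := rank_le_add_length (p.drop t)
  simp only [Walk.take_length, Walk.drop_length, Fin.val_last, Fin.val_zero] at h₁ h₂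
  omega

variable (n₁ n₂) in
abbrev UpSteps := {v : Fin n₂ → ℕ // StrictMono v ∧ ∀ i, v i < n₁ + n₂}

lemma UpSteps.sub_countBelow_le (w : UpSteps n₁ n₂) {t : ℕ} (ht : t ≤ n₁ + n₂) :
    t - countBelow w.1 t ≤ n₁ := by
  have := countBelow_le_add w.2.1.injective t (n₁ + n₂)
  rw [countBelow_of_le w.2.2 le_rfl] at this
  omega

lemma UpSteps.apply_mem_Icc (w : UpSteps n₁ n₂) (i : Fin n₂) :
    (i : ℕ) ≤ w.1 i ∧ w.1 i ≤ n₁ + i := by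
  have h₁ := countBelow_le_add w.2.1.injective 0 (w.1 i)
  have h₂ := countBelow_le_add w.2.1.injective (w.1 i + 1) (n₁ + n₂)
  rw [countBelow_apply w.2.1, countBelow_zero] at h₁
  rw [countBelow_apply_add_one w.2.1, countBelow_of_le w.2.2 le_rfl] at h₂
  have := w.2.2 i
  omega

-- The `min` only makes the first coordinate land in `Fin (n₁ + 1)`; it is inactive for
-- `t ≤ n₁ + n₂` by `UpSteps.sub_countBelow_le`.
variable (n₁) in
def stairVertex (v : Fin n₂ → ℕ) (t : ℕ) : Fin (n₁ + 1) × Fin (n₂ + 1) :=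
  (⟨min (t - countBelow v t) n₁, by omega⟩,
    ⟨countBelow v t, Nat.lt_succ_of_le (countBelow_le_card v t)⟩)

lemma stairVertex_eq_iff {v v' : Fin n₂ → ℕ} {t : ℕ} :
    stairVertex n₁ v t = stairVertex n₁ v' t ↔ countBelow v t = countBelow v' t := by
  simp only [stairVertex, Prod.ext_iff, Fin.ext_iff]
  exact ⟨And.right, fun h => by rw [h]; exact ⟨rfl, rfl⟩⟩

lemma stairVertex_zero (v : Fin n₂ → ℕ) : stairVertex n₁ v 0 = (0, 0) := by
  simp [stairVertex, countBelow_zero]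

lemma UpSteps.stairVertex_of_le (w : UpSteps n₁ n₂) {t : ℕ} (ht : n₁ + n₂ ≤ t) :
    stairVertex n₁ w.1 t = (Fin.last n₁, Fin.last n₂) := by
  simp only [stairVertex, countBelow_of_le w.2.2 ht, Prod.ext_iff, Fin.ext_iff, Fin.val_last,
    and_true]
  omega

lemma UpSteps.stairVertex_adj (w : UpSteps n₁ n₂) {t : ℕ} (ht : t < n₁ + n₂) :
    (grid n₁ n₂).Adj (stairVertex n₁ w.1 t) (stairVertex n₁ w.1 (t + 1)) := by
  have h₁ := w.sub_countBelow_le ht.le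
  have h₂ := w.sub_countBelow_le (t := t + 1) ht
  have h₃ := countBelow_mono w.1 (Nat.le_add_right t 1)
  have h₄ := countBelow_le_add w.2.1.injective t (t + 1)
  have h₅ := countBelow_le_add w.2.1.injective 0 t
  rw [countBelow_zero, Nat.sub_zero] at h₅
  rw [grid_adj_iff]
  simp only [stairVertex]
  omega

def UpSteps.walk (w : UpSteps n₁ n₂) :
    (grid n₁ n₂).Walk (0, 0) (Fin.last n₁, Fin.last n₂) :=
  (Walk.ofSeq (stairVertex n₁ w.1) (n₁ + n₂) fun _ ht => w.stairVertex_adj ht).copy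
    (stairVertex_zero w.1) (w.stairVertex_of_le le_rfl)

lemma UpSteps.length_walk (w : UpSteps n₁ n₂) : w.walk.length = n₁ + n₂ := by
  simp [UpSteps.walk, Walk.length_ofSeq]

lemma UpSteps.getVert_walk (w : UpSteps n₁ n₂) (t : ℕ) :
    w.walk.getVert t = stairVertex n₁ w.1 t := by
  rcases le_total t (n₁ + n₂) with ht | ht
  · simp [UpSteps.walk, Walk.getVert_ofSeq _ _ _ ht]
  · rw [Walk.getVert_of_length_le _ (w.length_walk ▸ ht), w.stairVertex_of_le ht]

variable (n₁ n₂) in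
lemma grid_dist : (grid n₁ n₂).dist (0, 0) (Fin.last n₁, Fin.last n₂) = n₁ + n₂ := by
  let w : UpSteps n₁ n₂ := ⟨Fin.val, Fin.val_strictMono, fun i => by omega⟩
  obtain ⟨p, hp⟩ := Reachable.exists_walk_length_eq_dist ⟨w.walk⟩
  have hlow := rank_le_add_length p
  have hup := dist_le w.walk
  simp only [Fin.val_last, Fin.val_zero, w.length_walk] at hlow hup
  omega

def UpSteps.toGeodesic (w : UpSteps n₁ n₂) :
    Geodesic (grid n₁ n₂) (0, 0) (Fin.last n₁, Fin.last n₂) :=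
  have h : w.walk.length = (grid n₁ n₂).dist _ _ := by rw [w.length_walk, grid_dist]
  ⟨w.walk, w.walk.isPath_of_length_eq_dist h, h⟩

lemma UpSteps.toGeodesic_injective :
    Function.Injective (UpSteps.toGeodesic (n₁ := n₁) (n₂ := n₂)) := by
  intro w w' h
  have hv : ∀ t, stairVertex n₁ w.1 t = stairVertex n₁ w'.1 t := fun t => by
    rw [← w.getVert_walk, ← w'.getVert_walk]
    exact congrArg (fun P : Geodesic _ _ _ => P.1.getVert t) h
  exact Subtype.ext
    (eq_of_countBelow_eq w.2.1 w'.2.1 (funext fun t => stairVertex_eq_iff.1 (hv t)))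

lemma UpSteps.toGeodesic_surjective :
    Function.Surjective (UpSteps.toGeodesic (n₁ := n₁) (n₂ := n₂)) := by
  rintro ⟨p, -, hp⟩
  rw [grid_dist] at hp
  have hstep : ∀ t, ((p.getVert t).2 : ℕ) ≤ (p.getVert (t + 1)).2 ∧
      ((p.getVert (t + 1)).2 : ℕ) ≤ (p.getVert t).2 + 1 := fun t => by
    rcases lt_or_ge t (n₁ + n₂) with ht | ht
    · have hadj := grid_adj_iff.1 (p.adj_getVert_succ (hp ▸ ht))
      have := rank_getVert hp ht.le
      have := rank_getVert hp (t := t + 1) ht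
      omega
    · simp [p.getVert_of_length_le (hp ▸ ht), p.getVert_of_length_le (hp ▸ ht.trans t.le_succ)]
  obtain ⟨v, hv, hvN, hcount⟩ := exists_strictMono_countBelow_eq
    (n := n₂) (y := fun t => (p.getVert t).2) (N := n₁ + n₂) (by simp)
    (monotone_nat_of_le_succ fun t => (hstep t).1) (fun t => (hstep t).2)
    (by simp [p.getVert_of_length_le hp.le])
  refine ⟨⟨v, hv, hvN⟩, Subtype.ext ?_⟩
  change UpSteps.walk _ = p
  refine Walk.ext_getVert_le_length (by rw [UpSteps.length_walk, hp]) fun t ht => ?_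
  rw [UpSteps.length_walk] at ht
  have := rank_getVert hp ht
  have := (p.getVert t).1.isLt
  rw [UpSteps.getVert_walk]
  simp only [stairVertex, Prod.ext_iff, Fin.ext_iff, hcount t ht, and_true]
  omega

variable (n₁ n₂) in
noncomputable def geodesicEquiv :
    UpSteps n₁ n₂ ≃ Geodesic (grid n₁ n₂) (0, 0) (Fin.last n₁, Fin.last n₂) :=
  Equiv.ofBijective _ ⟨UpSteps.toGeodesic_injective, UpSteps.toGeodesic_surjective⟩

lemma UpSteps.spg_adj_toGeodesic_iff (w w' : UpSteps n₁ n₂) :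
    (SPG (grid n₁ n₂) _ _).Adj w.toGeodesic w'.toGeodesic ↔
      ∃ k, ((w.1 k : ℤ) - w'.1 k).natAbs = 1 ∧ ∀ j, j ≠ k → w.1 j = w'.1 j := by
  rw [spg_adj_iff, ← exists_countBelow_diffOnlyAt_iff w.2.1 w'.2.1]
  simp only [DiffOnlyAt, UpSteps.toGeodesic, UpSteps.getVert_walk, ne_eq, stairVertex_eq_iff]

lemma UpSteps.sub_le_apply_sub (w : UpSteps n₁ n₂) (i j : Fin n₂) :
    (j : ℕ) - i ≤ w.1 j - w.1 i := by
  have := countBelow_le_add w.2.1.injective (w.1 i) (w.1 j)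
  rw [countBelow_apply w.2.1, countBelow_apply w.2.1] at this
  omega

variable (n₁ n₂) in
def staircase : Set (Fin n₂ → ℤ) :=
  {f | (∀ i, 0 ≤ f i ∧ f i ≤ (n₁ : ℤ)) ∧ Antitone f}

-- `n₁ + i - v i` counts the horizontal steps taken after the `(i + 1)`-st vertical one.
variable (n₁ n₂) in
def staircaseEquiv : UpSteps n₁ n₂ ≃ staircase n₁ n₂ where
  toFun w := ⟨fun i => n₁ + i - w.1 i, fun i => by dsimp only; have := w.apply_mem_Icc i; omega,
    fun i j hij => by
      dsimp only
      have := w.sub_le_apply_sub i j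
      have := w.2.1.monotone hij
      have : (i : ℕ) ≤ j := hij
      omega⟩
  invFun f := ⟨fun i => (n₁ + i - f.1 i).toNat, fun i j hij => by
      dsimp only
      have := f.2.2 hij.le
      have := (f.2.1 i).2
      have : (i : ℕ) < j := hij
      omega,
    fun i => by dsimp only; have := (f.2.1 i).1; omega⟩
  left_inv w := Subtype.ext (funext fun i => by dsimp only; omega)
  right_inv f := Subtype.ext (funext fun i => by dsimp only; have := (f.2.1 i).2; omega)

lemma induce_adj_staircaseEquiv_iff (w w' : UpSteps n₁ n₂) :
    ((latticeGraph n₂).induce (staircase n₁ n₂)).Adj (staircaseEquiv n₁ n₂ w)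
        (staircaseEquiv n₁ n₂ w') ↔
      ∃ k, ((w.1 k : ℤ) - w'.1 k).natAbs = 1 ∧ ∀ j, j ≠ k → w.1 j = w'.1 j := by
  simp only [comap_adj, Function.Embedding.subtype_apply, latticeGraph, staircaseEquiv,
    Equiv.coe_fn_mk]
  refine exists_congr fun k => and_congr (by omega) (forall_congr' fun j => imp_congr_right
    fun _ => by omega)

variable (n₁ n₂) in
noncomputable def spgIsoStaircase :
    SPG (grid n₁ n₂) (0, 0) (Fin.last n₁, Fin.last n₂) ≃g
      (latticeGraph n₂).induce (staircase n₁ n₂) where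
  toEquiv := (geodesicEquiv n₁ n₂).symm.trans (staircaseEquiv n₁ n₂)
  map_rel_iff' {U W} := by
    obtain ⟨w, rfl⟩ := (geodesicEquiv n₁ n₂).surjective U
    obtain ⟨w', rfl⟩ := (geodesicEquiv n₁ n₂).surjective W
    simp only [Equiv.trans_apply, Equiv.symm_apply_apply]
    rw [induce_adj_staircaseEquiv_iff]
    exact (UpSteps.spg_adj_toGeodesic_iff w w').symm

end Grid
end GridGeodesic

theorem stmt18 (n₁ n₂ : ℕ) :
    Nonempty (SPG (pathGraph (n₁ + 1) □ pathGraph (n₂ + 1))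
        (0, 0) (Fin.last n₁, Fin.last n₂) ≃g
      ((latticeGraph n₂).induce
        {f : Fin n₂ → ℤ | (∀ i, 0 ≤ f i ∧ f i ≤ (n₁ : ℤ)) ∧ Antitone f})) :=
  ⟨GridGeodesic.spgIsoStaircase n₁ n₂⟩
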